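/- arXiv:2210.07277 — 5 statements merged into one kernel-verified Lean document; each statement's English description precedes it below -/
import Mathlib

section
/- Let x_1, ..., x_N be points in ℝ^D and let K ≥ 1. Then the infimum over all centroid tuples (μ_1, ..., μ_K) ∈ (ℝ^D)^K of ∑_{n=1}^N min_{c ∈ {1,...,K}} ‖x_n − μ_c‖² equals the minimum over all assignment functions a : {1,...,N} → {1,...,K} of ∑_{k : a^{-1}(k) ≠ ∅} ∑_{n ∈ a^{-1}(k)} ‖x_n − μ*_k(a)‖², where μ*_k(a) = (1/|a^{-1}(k)|) ∑_{n ∈ a^{-1}(k)} x_n is the mean of the points assigned to cluster k. In particular the infimum over centroids is attained. -/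
/-!
Both sides are minima of the joint cost `∑ n, ‖x n - μ (a n)‖²` over centroids `μ` and
assignments `a`. For fixed `μ` the best assignment sends each point to a nearest centroid,
which gives the explicit objective; for fixed `a` the best centroid of each cluster is its
mean, because `∑ ‖x n - c‖² = ∑ ‖x n - m‖² + |S| ‖m - c‖²` for the mean `m` of the points `x n`,
`n ∈ S`. An assignment minimizing the partition objective, together with its cluster means,
therefore minimizes the joint cost, and these cluster means attain the infimum over centroids.
-/

open Finset

/-- The mean of the points assigned to cluster `k` by the assignment `a`
(`μ*_k(a)` in the statement). -/
noncomputable def clusterMean {D N K : ℕ} (x : Fin N → EuclideanSpace ℝ (Fin D))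
    (a : Fin N → Fin K) (k : Fin K) : EuclideanSpace ℝ (Fin D) :=
  ((Finset.univ.filter fun n => a n = k).card : ℝ)⁻¹ •
    ∑ n ∈ Finset.univ.filter fun n => a n = k, x n

/-- The K-means objective of an assignment `a`: the sum, over nonempty clusters, of the
squared distances of the cluster's members to the cluster mean. -/
noncomputable def partitionObjective {D N K : ℕ} (x : Fin N → EuclideanSpace ℝ (Fin D))
    (a : Fin N → Fin K) : ℝ :=
  ∑ k ∈ Finset.univ.filter fun k => (Finset.univ.filter fun n => a n = k).Nonempty,
    ∑ n ∈ Finset.univ.filter fun n => a n = k, ‖x n - clusterMean x a k‖ ^ 2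

theorem ciInf_eq_of_forall_le {ι α : Type*} [ConditionallyCompleteLattice α] {f : ι → α}
    {i₀ : ι} (h : ∀ i, f i₀ ≤ f i) : ⨅ i, f i = f i₀ :=
  IsLeast.csInf_eq ⟨Set.mem_range_self i₀, Set.forall_mem_range.2 h⟩

section Assignment

variable {ι κ : Type*} [Fintype ι] [Finite κ]

theorem sum_iInf_le_sum_comp (f : ι → κ → ℝ) (a : ι → κ) :
    ∑ n, ⨅ c, f n c ≤ ∑ n, f n (a n) :=
  sum_le_sum fun n _ => ciInf_le (Finite.bddBelow_range _) (a n)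

theorem exists_sum_iInf_eq_sum_comp [Nonempty κ] (f : ι → κ → ℝ) :
    ∃ a : ι → κ, ∑ n, ⨅ c, f n c = ∑ n, f n (a n) := by
  choose a ha using fun n => exists_eq_ciInf_of_finite (f := f n)
  exact ⟨a, sum_congr rfl fun n _ => (ha n).symm⟩

end Assignment

theorem Finset.sum_fiberwise_apply {ι κ M : Type*} [Fintype κ] [DecidableEq κ]
    [AddCommMonoid M] (s : Finset ι) (a : ι → κ) (f : ι → κ → M) :
    ∑ k, ∑ n ∈ s with a n = k, f n k = ∑ n ∈ s, f n (a n) := by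
  rw [← sum_fiberwise s a fun n => f n (a n)]
  exact sum_congr rfl fun k _ => sum_congr rfl fun n hn => by rw [(mem_filter.1 hn).2]

section Mean

variable {E ι : Type*} [NormedAddCommGroup E] [InnerProductSpace ℝ E]

theorem sum_norm_sub_sq_eq_sum_norm_sub_mean_sq_add (s : Finset ι) (x : ι → E) (c : E) :
    ∑ n ∈ s, ‖x n - c‖ ^ 2 =
      ∑ n ∈ s, ‖x n - (#s : ℝ)⁻¹ • ∑ m ∈ s, x m‖ ^ 2
        + #s * ‖(#s : ℝ)⁻¹ • ∑ m ∈ s, x m - c‖ ^ 2 := by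
  set m := (#s : ℝ)⁻¹ • ∑ m ∈ s, x m
  have hdev : ∑ n ∈ s, (x n - m) = 0 := by
    rcases s.eq_empty_or_nonempty with rfl | hs
    · exact sum_empty
    rw [sum_sub_distrib, sum_const, ← Nat.cast_smul_eq_nsmul ℝ,
      smul_inv_smul₀ (Nat.cast_ne_zero.2 hs.card_ne_zero), sub_self]
  have hsplit (n : ι) : ‖x n - c‖ ^ 2 =
      ‖x n - m‖ ^ 2 + 2 * inner ℝ (x n - m) (m - c) + ‖m - c‖ ^ 2 := by
    rw [← norm_add_sq_real, sub_add_sub_cancel]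
  simp only [hsplit, sum_add_distrib, ← mul_sum, ← sum_inner, hdev, inner_zero_left,
    sum_const, nsmul_eq_mul]
  ring

theorem sum_norm_sub_mean_sq_le (s : Finset ι) (x : ι → E) (c : E) :
    ∑ n ∈ s, ‖x n - (#s : ℝ)⁻¹ • ∑ m ∈ s, x m‖ ^ 2 ≤ ∑ n ∈ s, ‖x n - c‖ ^ 2 := by
  rw [sum_norm_sub_sq_eq_sum_norm_sub_mean_sq_add s x c]
  exact le_add_of_nonneg_right (by positivity)

end Mean

section KMeans

variable {D N K : ℕ} (x : Fin N → EuclideanSpace ℝ (Fin D)) (a : Fin N → Fin K)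

theorem partitionObjective_eq_sum_fibers :
    partitionObjective x a =
      ∑ k, ∑ n with a n = k, ‖x n - clusterMean x a k‖ ^ 2 :=
  sum_filter_of_ne fun _ _ h => nonempty_of_sum_ne_zero h

theorem partitionObjective_eq_sum_norm_sub_clusterMean_sq :
    partitionObjective x a = ∑ n, ‖x n - clusterMean x a (a n)‖ ^ 2 := by
  rw [partitionObjective_eq_sum_fibers, sum_fiberwise_apply]

theorem partitionObjective_le_sum_norm_sub_sq (μ : Fin K → EuclideanSpace ℝ (Fin D)) :
    partitionObjective x a ≤ ∑ n, ‖x n - μ (a n)‖ ^ 2 := by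
  rw [partitionObjective_eq_sum_fibers,
    ← sum_fiberwise_apply univ a fun n k => ‖x n - μ k‖ ^ 2]
  exact sum_le_sum fun k _ => sum_norm_sub_mean_sq_le _ x (μ k)

end KMeans

/-- The infimum over centroid tuples `(μ_1, ..., μ_K)` of
`∑ n, min_c ‖x n - μ c‖²` equals the minimum over assignment functions `a` of the
sum over nonempty clusters of squared distances to the cluster means; and the
infimum over centroids is attained. -/
theorem kmeans_explicit_eq_partition {D N K : ℕ} (hK : 1 ≤ K)
    (x : Fin N → EuclideanSpace ℝ (Fin D)) :
    ((⨅ μ : Fin K → EuclideanSpace ℝ (Fin D), ∑ n, ⨅ c, ‖x n - μ c‖ ^ 2)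
        = ⨅ a : Fin N → Fin K, partitionObjective x a) ∧
      ∃ μ : Fin K → EuclideanSpace ℝ (Fin D),
        (∑ n, ⨅ c, ‖x n - μ c‖ ^ 2)
          = ⨅ μ' : Fin K → EuclideanSpace ℝ (Fin D), ∑ n, ⨅ c, ‖x n - μ' c‖ ^ 2 := by
  have : NeZero K := ⟨by omega⟩
  obtain ⟨a₀, ha₀⟩ := Finite.exists_min (partitionObjective (K := K) x)
  set μ₀ := clusterMean x a₀
  have hμ₀ : ∑ n, ⨅ c, ‖x n - μ₀ c‖ ^ 2 ≤ partitionObjective x a₀ :=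
    (sum_iInf_le_sum_comp _ a₀).trans_eq
      (partitionObjective_eq_sum_norm_sub_clusterMean_sq x a₀).symm
  have hle (μ : Fin K → EuclideanSpace ℝ (Fin D)) :
      partitionObjective x a₀ ≤ ∑ n, ⨅ c, ‖x n - μ c‖ ^ 2 := by
    obtain ⟨a, ha⟩ := exists_sum_iInf_eq_sum_comp fun n c => ‖x n - μ c‖ ^ 2
    exact (ha₀ a).trans (ha ▸ partitionObjective_le_sum_norm_sub_sq x a μ)
  have hmin : ∑ n, ⨅ c, ‖x n - μ₀ c‖ ^ 2 = partitionObjective x a₀ :=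
    hμ₀.antisymm (hle μ₀)
  have hInf : ⨅ μ : Fin K → EuclideanSpace ℝ (Fin D), ∑ n, ⨅ c, ‖x n - μ c‖ ^ 2 =
      ∑ n, ⨅ c, ‖x n - μ₀ c‖ ^ 2 :=
    ciInf_eq_of_forall_le fun μ => hmin ▸ hle μ
  exact ⟨by rw [hInf, hmin, ciInf_eq_of_forall_le ha₀], μ₀, hInf.symm⟩
end

section
/- Let x_1, ..., x_N be points in ℝ^D and let K ≥ 1. Then the infimum over all centroid tuples (μ_1, ..., μ_K) ∈ (ℝ^D)^K of ∑_{n=1}^N min_{c ∈ {1,...,K}} ‖x_n − μ_c‖² equals the minimum over all assignment functions a : {1,...,N} → {1,...,K} of ∑_{k : a^{-1}(k) ≠ ∅} (1/(2|a^{-1}(k)|)) ∑_{n, n' ∈ a^{-1}(k)} ‖x_n − x_{n'}‖². (Equivalence of explicit centroid K-means and implicit pairwise-distance K-means.) -/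
/-!
Huygens' identity `∑ i ∈ s, ‖x i - μ‖² = ∑ i ∈ s, ‖x i - c‖² + |s| ‖c - μ‖²`, with `c` the centroid
of `s`, says that the centroid minimises the scatter of a cluster around a common centre, and,
applied with `μ = x j` and summed over `j`, that the pairwise sum of squared distances in the
cluster is `2|s|` times that minimal scatter. Hence the implicit objective of an assignment is
its explicit cost with the cluster centroids as centres, which is at most its cost with any other
centres. Conversely, assigning each point to a nearest centre realises the explicit objective of
those centres as the cost of an assignment.
-/

open Finset

/-- The implicit (pairwise-distance) K-means objective of an assignment `a`: for each
nonempty cluster, the sum of pairwise squared distances among its members divided by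
twice the cluster size. -/
noncomputable def pairwiseObjective {D N K : ℕ} (x : Fin N → EuclideanSpace ℝ (Fin D))
    (a : Fin N → Fin K) : ℝ :=
  ∑ k ∈ Finset.univ.filter fun k => (Finset.univ.filter fun n => a n = k).Nonempty,
    (1 / (2 * ((Finset.univ.filter fun n => a n = k).card : ℝ))) *
      ∑ n ∈ Finset.univ.filter fun n => a n = k,
        ∑ n' ∈ Finset.univ.filter fun n' => a n' = k, ‖x n - x n'‖ ^ 2

namespace Finset

variable {ι E : Type*} [NormedAddCommGroup E] [InnerProductSpace ℝ E] {s : Finset ι}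

lemma centroid_eq_inv_card_smul_sum (x : ι → E) (hs : s.Nonempty) :
    s.centroid ℝ x = (#s : ℝ)⁻¹ • ∑ i ∈ s, x i := by
  rw [centroid_def, affineCombination_eq_linear_combination _ _ _
    (sum_centroidWeights_eq_one_of_nonempty ℝ s hs), smul_sum]
  rfl

lemma sum_sub_centroid_eq_zero (x : ι → E) (hs : s.Nonempty) :
    ∑ i ∈ s, (x i - s.centroid ℝ x) = 0 := by
  rw [sum_sub_distrib, sum_const, centroid_eq_inv_card_smul_sum x hs, ← Nat.cast_smul_eq_nsmul ℝ,
    smul_inv_smul₀ (by exact_mod_cast hs.card_ne_zero), sub_self]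

lemma sum_norm_sub_sq_eq_sum_norm_sub_centroid_sq_add (x : ι → E) (hs : s.Nonempty) (μ : E) :
    ∑ i ∈ s, ‖x i - μ‖ ^ 2
      = ∑ i ∈ s, ‖x i - s.centroid ℝ x‖ ^ 2 + #s * ‖s.centroid ℝ x - μ‖ ^ 2 := by
  have h : ∀ i, ‖x i - μ‖ ^ 2 = ‖x i - s.centroid ℝ x‖ ^ 2
      + 2 * inner ℝ (x i - s.centroid ℝ x) (s.centroid ℝ x - μ) + ‖s.centroid ℝ x - μ‖ ^ 2 :=
    fun i => by rw [← norm_add_sq_real, sub_add_sub_cancel]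
  simp only [h, sum_add_distrib, ← mul_sum, ← sum_inner, sum_sub_centroid_eq_zero x hs,
    inner_zero_left, mul_zero, add_zero, sum_const, nsmul_eq_mul]

lemma sum_norm_sub_centroid_sq_le (x : ι → E) (μ : E) :
    ∑ i ∈ s, ‖x i - s.centroid ℝ x‖ ^ 2 ≤ ∑ i ∈ s, ‖x i - μ‖ ^ 2 := by
  rcases s.eq_empty_or_nonempty with rfl | hs
  · simp
  rw [sum_norm_sub_sq_eq_sum_norm_sub_centroid_sq_add x hs μ]
  exact le_add_of_nonneg_right (by positivity)

lemma sum_sum_norm_sub_sq_eq (x : ι → E) :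
    ∑ i ∈ s, ∑ j ∈ s, ‖x i - x j‖ ^ 2 = 2 * #s * ∑ i ∈ s, ‖x i - s.centroid ℝ x‖ ^ 2 := by
  rcases s.eq_empty_or_nonempty with rfl | hs
  · simp
  calc ∑ i ∈ s, ∑ j ∈ s, ‖x i - x j‖ ^ 2
      = ∑ i ∈ s, (∑ j ∈ s, ‖x j - s.centroid ℝ x‖ ^ 2 + #s * ‖x i - s.centroid ℝ x‖ ^ 2) := by
        refine sum_congr rfl fun i _ => ?_
        rw [norm_sub_rev (x i), ← sum_norm_sub_sq_eq_sum_norm_sub_centroid_sq_add x hs]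
        exact sum_congr rfl fun j _ => by rw [norm_sub_rev]
    _ = 2 * #s * ∑ i ∈ s, ‖x i - s.centroid ℝ x‖ ^ 2 := by
        rw [sum_add_distrib, sum_const, nsmul_eq_mul, ← mul_sum]
        ring

lemma sum_fiberwise_dep {κ M : Type*} [Fintype κ] [DecidableEq κ] [AddCommMonoid M]
    (s : Finset ι) (g : ι → κ) (f : κ → ι → M) :
    ∑ j, ∑ i ∈ s with g i = j, f j i = ∑ i ∈ s, f (g i) i := by
  rw [← sum_fiberwise s g fun i => f (g i) i]
  exact sum_congr rfl fun j _ => sum_congr rfl fun i hi => by rw [(mem_filter.1 hi).2]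

end Finset

section Clustering

variable {ι κ E : Type*} [Fintype ι] [DecidableEq κ] [NormedAddCommGroup E] [InnerProductSpace ℝ E]

noncomputable def clusterCentroid (x : ι → E) (a : ι → κ) (k : κ) : E :=
  ({n | a n = k} : Finset ι).centroid ℝ x

lemma sum_norm_sub_clusterCentroid_sq_le [Fintype κ] (x : ι → E) (a : ι → κ) (μ : κ → E) :
    ∑ n, ‖x n - clusterCentroid x a (a n)‖ ^ 2 ≤ ∑ n, ‖x n - μ (a n)‖ ^ 2 := by
  rw [← sum_fiberwise_dep univ a fun k n => ‖x n - clusterCentroid x a k‖ ^ 2,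
    ← sum_fiberwise_dep univ a fun k n => ‖x n - μ k‖ ^ 2]
  exact sum_le_sum fun k _ => sum_norm_sub_centroid_sq_le x (μ k)

end Clustering

lemma pairwiseObjective_eq_sum_norm_sub_clusterCentroid_sq {D N K : ℕ}
    (x : Fin N → EuclideanSpace ℝ (Fin D)) (a : Fin N → Fin K) :
    pairwiseObjective x a = ∑ n, ‖x n - clusterCentroid x a (a n)‖ ^ 2 := by
  unfold pairwiseObjective
  rw [← sum_fiberwise_dep univ a fun k n => ‖x n - clusterCentroid x a k‖ ^ 2,
    ← sum_filter_of_ne fun k _ h => nonempty_of_sum_ne_zero h]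
  refine sum_congr rfl fun k hk => ?_
  have hcard : (#{n | a n = k} : ℝ) ≠ 0 := by exact_mod_cast (mem_filter.1 hk).2.card_ne_zero
  rw [sum_sum_norm_sub_sq_eq, clusterCentroid]
  field_simp

/-- The infimum over centroid tuples `(μ_1, ..., μ_K)` of
`∑ n, min_c ‖x n - μ c‖²` equals the minimum over assignment functions `a` of the
implicit (pairwise-distance) K-means objective. -/
theorem kmeans_explicit_eq_implicit {D N K : ℕ} (hK : 1 ≤ K)
    (x : Fin N → EuclideanSpace ℝ (Fin D)) :
    (⨅ μ : Fin K → EuclideanSpace ℝ (Fin D), ∑ n, ⨅ c, ‖x n - μ c‖ ^ 2)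
      = ⨅ a : Fin N → Fin K, pairwiseObjective x a := by
  have : Nonempty (Fin K) := ⟨⟨0, hK⟩⟩
  apply le_antisymm
  · refine le_ciInf fun a => ?_
    have hbdd : BddBelow (Set.range fun μ : Fin K → EuclideanSpace ℝ (Fin D) =>
        ∑ n, ⨅ c, ‖x n - μ c‖ ^ 2) :=
      ⟨0, by rintro _ ⟨μ, rfl⟩; exact sum_nonneg fun n _ => le_ciInf fun c => by positivity⟩
    calc (⨅ μ : Fin K → EuclideanSpace ℝ (Fin D), ∑ n, ⨅ c, ‖x n - μ c‖ ^ 2)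
        ≤ ∑ n, ⨅ c, ‖x n - clusterCentroid x a c‖ ^ 2 := ciInf_le hbdd _
      _ ≤ ∑ n, ‖x n - clusterCentroid x a (a n)‖ ^ 2 :=
        sum_le_sum fun n _ => ciInf_le (Set.finite_range _).bddBelow _
      _ = pairwiseObjective x a := (pairwiseObjective_eq_sum_norm_sub_clusterCentroid_sq x a).symm
  · refine le_ciInf fun μ => ?_
    choose a ha using fun n => exists_eq_ciInf_of_finite (f := fun c => ‖x n - μ c‖ ^ 2)
    calc ⨅ a : Fin N → Fin K, pairwiseObjective x a
        ≤ pairwiseObjective x a := ciInf_le (Set.finite_range _).bddBelow a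
      _ ≤ ∑ n, ‖x n - μ (a n)‖ ^ 2 := by
        rw [pairwiseObjective_eq_sum_norm_sub_clusterCentroid_sq]
        exact sum_norm_sub_clusterCentroid_sq_le x a μ
      _ = ∑ n, ⨅ c, ‖x n - μ c‖ ^ 2 := sum_congr rfl fun n _ => ha n
end

section
/- Let A and B be real symmetric positive semidefinite K×K matrices, and let λ_1(A), ..., λ_K(A) denote the eigenvalues of A (with multiplicity). Then ‖A + B − I‖_F² ≥ ‖B − I‖_F² + ∑_{i=1}^K (λ_i(A) − 1)² − K, where ‖·‖_F is the Frobenius norm and I is the K×K identity matrix. -/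
/-!
Polarization gives, entrywise, `‖A + B - I‖² + ‖I‖² = ‖A - I‖² + ‖B - I‖² + 2 ⟨A, B⟩` for the
Frobenius inner product. Here `‖I‖² = K`, `‖A - I‖² = ∑ (λᵢ(A) - 1)²` by the spectral theorem, and
`⟨A, B⟩ = tr (A B) ≥ 0` for positive semidefinite `A` and `B`, since writing `B = Xᴴ X` gives
`tr (A B) = tr (X A Xᴴ)`.
-/

open Matrix Finset

namespace Matrix

variable {m n : Type*} [Fintype n]

theorem trace_mul_transpose [Fintype m] {R : Type*} [CommSemiring R] (M N : Matrix m n R) :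
    (M * Nᵀ).trace = ∑ i, ∑ j, M i j * N i j := by
  simp [trace, mul_apply]

theorem sum_sq_add_sub_add_sum_sq [Fintype m] {R : Type*} [CommRing R] (A B C : Matrix m n R) :
    ∑ i, ∑ j, (A + B - C) i j ^ 2 + ∑ i, ∑ j, C i j ^ 2
      = ∑ i, ∑ j, (A - C) i j ^ 2 + ∑ i, ∑ j, (B - C) i j ^ 2 + 2 * ∑ i, ∑ j, A i j * B i j := by
  simp only [← sum_add_distrib, mul_sum]
  refine sum_congr rfl fun i _ => sum_congr rfl fun j _ => ?_
  simp only [add_apply, sub_apply]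
  ring

open scoped ComplexOrder in
theorem PosSemidef.trace_mul_nonneg {𝕜 : Type*} [RCLike 𝕜] {A B : Matrix n n 𝕜}
    (hA : A.PosSemidef) (hB : B.PosSemidef) : 0 ≤ (A * B).trace := by
  classical
  obtain ⟨X, rfl⟩ : ∃ X : Matrix n n 𝕜, B = star X * X := by
    open scoped MatrixOrder in
    exact CStarAlgebra.nonneg_iff_eq_star_mul_self.mp hB.nonneg
  rw [← mul_assoc, trace_mul_comm, ← mul_assoc]
  exact (hA.mul_mul_conjTranspose_same X).trace_nonneg

theorem IsHermitian.trace_mul_self {𝕜 : Type*} [RCLike 𝕜] [DecidableEq n] {A : Matrix n n 𝕜}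
    (hA : A.IsHermitian) : (A * A).trace = ∑ i, (hA.eigenvalues i : 𝕜) ^ 2 := by
  conv_lhs => rw [hA.spectral_theorem]
  rw [← map_mul, Unitary.conjStarAlgAut_apply, trace_mul_cycle,
    Unitary.coe_star_mul_self, one_mul, diagonal_mul_diagonal, trace_diagonal]
  simp [sq]

theorem IsHermitian.sum_sq_sub_smul_one [DecidableEq n] {A : Matrix n n ℝ}
    (hA : A.IsHermitian) (c : ℝ) :
    ∑ i, ∑ j, (A - c • 1) i j ^ 2 = ∑ i, (hA.eigenvalues i - c) ^ 2 := by
  have hsymm : (A - c • 1)ᵀ = A - c • 1 := by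
    simp [(isHermitian_iff_isSymm.mp hA).eq]
  have hsq : (A - c • 1) * (A - c • 1) = A * A - (2 * c) • A + (c ^ 2) • 1 := by
    simp only [sub_mul, mul_sub, mul_smul_comm, smul_mul_assoc, mul_one, one_mul]
    module
  calc ∑ i, ∑ j, (A - c • 1) i j ^ 2 = ((A - c • 1) * (A - c • 1)).trace := by
        simp_rw [sq, ← trace_mul_transpose, hsymm]
    _ = ∑ i, hA.eigenvalues i ^ 2 - 2 * c * ∑ i, hA.eigenvalues i + Fintype.card n * c ^ 2 := by
        rw [hsq, trace_add, trace_sub, trace_smul, trace_smul, trace_one, hA.trace_mul_self,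
          hA.trace_eq_sum_eigenvalues]
        simp only [Real.ringHom_apply, smul_eq_mul]
        ring
    _ = ∑ i, (hA.eigenvalues i - c) ^ 2 := by
        simp only [sub_sq, sum_add_distrib, sum_sub_distrib, ← sum_mul, ← mul_sum, sum_const,
          card_univ, nsmul_eq_mul]
        ring

end Matrix

/-- For real symmetric positive semidefinite `K×K` matrices `A` and `B`
with eigenvalues `λ_i(A)`, one has
`‖A + B − I‖_F² ≥ ‖B − I‖_F² + ∑ i, (λ_i(A) − 1)² − K`,
where the squared Frobenius norm of `M` is `∑ i j, (M i j)²`. -/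
theorem frobenius_lower_bound {K : ℕ} (A B : Matrix (Fin K) (Fin K) ℝ)
    (hA : A.PosSemidef) (hB : B.PosSemidef) :
    (∑ i, ∑ j, ((B - 1) i j) ^ 2) + (∑ i, (hA.isHermitian.eigenvalues i - 1) ^ 2) - (K : ℝ)
      ≤ ∑ i, ∑ j, ((A + B - 1) i j) ^ 2 := by
  have hAB : 0 ≤ ∑ i, ∑ j, A i j * B i j := by
    rw [← trace_mul_transpose, (isHermitian_iff_isSymm.mp hB.isHermitian).eq]
    exact hA.trace_mul_nonneg hB
  have hA_one : ∑ i, ∑ j, (A - 1) i j ^ 2 = ∑ i, (hA.isHermitian.eigenvalues i - 1) ^ 2 := by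
    simpa using hA.isHermitian.sum_sq_sub_smul_one 1
  have h_one : ∑ i, ∑ j, (1 : Matrix (Fin K) (Fin K) ℝ) i j ^ 2 = K := by
    simp [one_apply]
  have := sum_sq_add_sub_add_sum_sq A B 1
  linarith
end

section
/- Let v ∈ ℝ^K and fix k ∈ {1,...,K}. Then lim_{σ → 0⁺} ( −σ · log( softmax(v/σ)_k ) ) = (max_{j=1,...,K} v_j) − v_k. -/
/-!
Writing `M = max_j v_j`, we have `−σ · log softmax(v/σ)_k = σ · log ∑_j exp(v_j/σ) − v_k`, and the
log-sum-exp at temperature `σ` is squeezed between `M` (keep only a maximal term) and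
`M + σ · log K` (bound every term by `exp(M/σ)`).
-/

open Filter Topology Real

/-- `softmax v k = exp (v k) / ∑ j, exp (v j)`. -/
noncomputable def softmax {K : ℕ} (v : Fin K → ℝ) (k : Fin K) : ℝ :=
  Real.exp (v k) / ∑ j, Real.exp (v j)

namespace Finset

variable {ι : Type*} (s : Finset ι) (hs : s.Nonempty) (f : ι → ℝ) {σ : ℝ}

theorem sup'_le_mul_log_sum_exp_div (hσ : 0 < σ) :
    s.sup' hs f ≤ σ * log (∑ i ∈ s, exp (f i / σ)) := by
  obtain ⟨i, hi, hmax⟩ := s.exists_mem_eq_sup' hs f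
  have hterm : exp (f i / σ) ≤ ∑ j ∈ s, exp (f j / σ) :=
    single_le_sum (f := fun j => exp (f j / σ)) (fun j _ => (exp_pos _).le) hi
  have hlog : f i / σ ≤ log (∑ j ∈ s, exp (f j / σ)) :=
    (le_log_iff_exp_le (sum_pos (fun j _ => exp_pos _) hs)).2 hterm
  rw [hmax, ← div_le_iff₀' hσ]
  exact hlog

theorem mul_log_sum_exp_div_le (hσ : 0 < σ) :
    σ * log (∑ i ∈ s, exp (f i / σ)) ≤ s.sup' hs f + σ * log s.card := by
  have hsum : ∑ i ∈ s, exp (f i / σ) ≤ s.card * exp (s.sup' hs f / σ) := by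
    rw [← nsmul_eq_mul]
    refine sum_le_card_nsmul _ _ _ fun i hi => exp_le_exp.2 ?_
    exact div_le_div_of_nonneg_right (le_sup' f hi) hσ.le
  have hcard : (0 : ℝ) < s.card := by exact_mod_cast hs.card_pos
  calc σ * log (∑ i ∈ s, exp (f i / σ))
      ≤ σ * log (s.card * exp (s.sup' hs f / σ)) := by
        gcongr
    _ = s.sup' hs f + σ * log s.card := by
        rw [log_mul hcard.ne' (exp_ne_zero _), log_exp]
        field_simp
        ring

theorem tendsto_mul_log_sum_exp_div :
    Tendsto (fun σ => σ * log (∑ i ∈ s, exp (f i / σ))) (𝓝[>] 0) (𝓝 (s.sup' hs f)) := by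
  have hupper : Tendsto (fun σ : ℝ => s.sup' hs f + σ * log s.card) (𝓝[>] 0)
      (𝓝 (s.sup' hs f)) := by
    have : Tendsto (fun σ : ℝ => s.sup' hs f + σ * log s.card) (𝓝 0)
        (𝓝 (s.sup' hs f + 0 * log s.card)) :=
      ((continuous_mul_const _).const_add _).tendsto 0
    simpa using this.mono_left nhdsWithin_le_nhds
  refine tendsto_of_tendsto_of_tendsto_of_le_of_le' tendsto_const_nhds hupper ?_ ?_
  · filter_upwards [self_mem_nhdsWithin] with σ hσ
    exact sup'_le_mul_log_sum_exp_div s hs f hσ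
  · filter_upwards [self_mem_nhdsWithin] with σ hσ
    exact mul_log_sum_exp_div_le s hs f hσ

end Finset

theorem log_softmax {K : ℕ} (v : Fin K → ℝ) (k : Fin K) :
    log (softmax v k) = v k - log (∑ j, exp (v j)) := by
  have hsum : 0 < ∑ j, exp (v j) := Finset.sum_pos (fun j _ => exp_pos _) ⟨k, Finset.mem_univ k⟩
  rw [softmax, log_div (exp_ne_zero _) hsum.ne', log_exp]

/-- For any `v ∈ ℝ^K` and `k`,
`lim_{σ → 0⁺} (−σ · log (softmax (v/σ) k)) = max_j v_j − v_k`. -/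
theorem neg_temp_log_softmax_tendsto {K : ℕ} (v : Fin K → ℝ) (k : Fin K) :
    Filter.Tendsto (fun σ : ℝ => -σ * Real.log (softmax (fun j => v j / σ) k))
      (nhdsWithin 0 (Set.Ioi 0))
      (nhds ((Finset.univ.sup' ⟨k, Finset.mem_univ k⟩ v) - v k)) := by
  have hlim := (Finset.univ.tendsto_mul_log_sum_exp_div ⟨k, Finset.mem_univ k⟩ v).sub_const (v k)
  refine hlim.congr' ?_
  filter_upwards [self_mem_nhdsWithin] with σ hσ
  have hcancel : σ * (v k / σ) = v k := mul_div_cancel₀ _ (ne_of_gt hσ)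
  rw [log_softmax]
  linear_combination hcancel
end

section
/- Let x, μ_1, ..., μ_K be unit vectors in ℝ^D, let W = [μ_1, ..., μ_K] so that (Wᵀx)_j = ⟨μ_j, x⟩, and fix k ∈ {1,...,K}. Then lim_{σ → 0⁺} σ · H( e_k, softmax(Wᵀx/σ) ) = (1/2)·( ‖x − μ_k‖² − min_{c=1,...,K} ‖x − μ_c‖² ), where H(p, q) = −∑_{j=1}^K p_j log q_j is the cross-entropy and e_k is the one-hot vector at coordinate k. -/
open RealInnerProductSpace

/-- Cross-entropy `H(p, q) = −∑ j, p j * log (q j)`. -/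
noncomputable def crossEntropy {K : ℕ} (p q : Fin K → ℝ) : ℝ :=
  -∑ j, p j * Real.log (q j)

/-- The one-hot vector `e_k`. -/
def onehot {K : ℕ} (k : Fin K) : Fin K → ℝ :=
  fun j => if j = k then 1 else 0

/-!
Writing `v j = ⟪μ j, x⟫`, the cross-entropy against a one-hot target is a log-sum-exp minus one
logit, so `σ · H(e_k, softmax (v / σ)) = σ log ∑ⱼ exp (v j / σ) - v k`. The tempered
log-sum-exp lies between `max v` and `max v + σ log K`, hence tends to `max v` as `σ → 0⁺`.
For unit vectors `‖x - μ c‖² = 2 - 2 v c`, so the right-hand side is also `max v - v k`.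
-/

open Filter Topology Real

theorem Finset.Nonempty.sum_exp_pos {ι : Type*} {s : Finset ι} (hs : s.Nonempty) (f : ι → ℝ) :
    0 < ∑ j ∈ s, exp (f j) :=
  Finset.sum_pos (fun _ _ => exp_pos _) hs

section LogSumExp

variable {ι : Type*} {s : Finset ι} (hs : s.Nonempty) (v : ι → ℝ) {σ : ℝ}

theorem Finset.sup'_le_mul_log_sum_exp_div_s8 (hσ : 0 < σ) :
    s.sup' hs v ≤ σ * log (∑ j ∈ s, exp (v j / σ)) := by
  obtain ⟨i, hi, hmax⟩ := s.exists_mem_eq_sup' hs v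
  have hexp : exp (v i / σ) ≤ ∑ j ∈ s, exp (v j / σ) :=
    Finset.single_le_sum (fun j _ => (exp_pos (v j / σ)).le) hi
  have hlog : v i / σ ≤ log (∑ j ∈ s, exp (v j / σ)) :=
    (le_log_iff_exp_le (hs.sum_exp_pos _)).2 hexp
  rw [hmax, ← div_le_iff₀' hσ]
  exact hlog

theorem Finset.mul_log_sum_exp_div_le_s8 (hσ : 0 < σ) :
    σ * log (∑ j ∈ s, exp (v j / σ)) ≤ s.sup' hs v + σ * log s.card := by
  have hsum : ∑ j ∈ s, exp (v j / σ) ≤ s.card * exp (s.sup' hs v / σ) := by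
    rw [← nsmul_eq_mul]
    refine Finset.sum_le_card_nsmul _ _ _ fun j hj => exp_le_exp.2 ?_
    exact div_le_div_of_nonneg_right (s.le_sup' v hj) hσ.le
  have hcard : (0 : ℝ) < s.card := by exact_mod_cast hs.card_pos
  have hlog : log (∑ j ∈ s, exp (v j / σ)) ≤ s.sup' hs v / σ + log s.card := by
    calc log (∑ j ∈ s, exp (v j / σ))
        ≤ log (s.card * exp (s.sup' hs v / σ)) := log_le_log (hs.sum_exp_pos _) hsum
      _ = s.sup' hs v / σ + log s.card := by
        rw [log_mul hcard.ne' (exp_pos _).ne', log_exp, add_comm]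
  calc σ * log (∑ j ∈ s, exp (v j / σ))
      ≤ σ * (s.sup' hs v / σ + log s.card) := mul_le_mul_of_nonneg_left hlog hσ.le
    _ = s.sup' hs v + σ * log s.card := by field_simp

theorem Finset.tendsto_mul_log_sum_exp_div_s8 :
    Tendsto (fun σ => σ * log (∑ j ∈ s, exp (v j / σ))) (𝓝[>] 0) (𝓝 (s.sup' hs v)) := by
  have hupper : Tendsto (fun σ : ℝ => s.sup' hs v + σ * log s.card) (𝓝[>] 0)
      (𝓝 (s.sup' hs v)) := by
    have h := ((continuous_mul_const (log s.card)).const_add (s.sup' hs v)).tendsto 0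
    simpa using h.mono_left nhdsWithin_le_nhds
  refine tendsto_of_tendsto_of_tendsto_of_le_of_le' tendsto_const_nhds hupper ?_ ?_ <;>
    filter_upwards [self_mem_nhdsWithin] with σ hσ
  · exact s.sup'_le_mul_log_sum_exp_div_s8 hs v hσ
  · exact s.mul_log_sum_exp_div_le_s8 hs v hσ

end LogSumExp

theorem crossEntropy_onehot_softmax {K : ℕ} (v : Fin K → ℝ) (k : Fin K) :
    crossEntropy (onehot k) (softmax v) = log (∑ j, exp (v j)) - v k := by
  have hsum : 0 < ∑ j, exp (v j) := Finset.Nonempty.sum_exp_pos ⟨k, Finset.mem_univ k⟩ v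
  simp only [crossEntropy, onehot, softmax, ite_mul, one_mul, zero_mul, Finset.sum_ite_eq',
    Finset.mem_univ, if_true]
  rw [log_div (exp_pos _).ne' hsum.ne', log_exp]
  ring

theorem norm_sub_sq_eq_two_sub_two_inner {E : Type*} [NormedAddCommGroup E]
    [InnerProductSpace ℝ E] {x y : E} (hx : ‖x‖ = 1) (hy : ‖y‖ = 1) :
    ‖x - y‖ ^ 2 = 2 - 2 * ⟪y, x⟫ := by
  rw [norm_sub_sq_real, hx, hy, real_inner_comm]
  ring

theorem Finset.inf'_norm_sub_sq_eq_two_sub_two_sup'_inner {E ι : Type*} [NormedAddCommGroup E]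
    [InnerProductSpace ℝ E] {s : Finset ι} (hs : s.Nonempty) {x : E} {μ : ι → E}
    (hx : ‖x‖ = 1) (hμ : ∀ j, ‖μ j‖ = 1) :
    s.inf' hs (fun c => ‖x - μ c‖ ^ 2) = 2 - 2 * s.sup' hs (fun c => ⟪μ c, x⟫) := by
  simp only [norm_sub_sq_eq_two_sub_two_inner hx (hμ _)]
  obtain ⟨i, hi, hmax⟩ := s.exists_mem_eq_sup' hs (fun c => ⟪μ c, x⟫)
  refine le_antisymm ?_ (s.le_inf' hs _ fun c hc => ?_)
  · exact hmax ▸ s.inf'_le _ hi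
  · linarith [s.le_sup' (fun c => ⟪μ c, x⟫) hc]

/-- For unit vectors `x, μ_1, ..., μ_K` in `ℝ^D`, with
`(Wᵀx)_j = ⟨μ_j, x⟩`, and any fixed `k`,
`lim_{σ → 0⁺} σ · H(e_k, softmax (Wᵀx/σ)) = (1/2)(‖x − μ_k‖² − min_c ‖x − μ_c‖²)`. -/
theorem temp_cross_entropy_tendsto {D K : ℕ} (x : EuclideanSpace ℝ (Fin D))
    (μ : Fin K → EuclideanSpace ℝ (Fin D))
    (hx : ‖x‖ = 1) (hμ : ∀ j, ‖μ j‖ = 1) (k : Fin K) :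
    Filter.Tendsto
      (fun σ : ℝ => σ * crossEntropy (onehot k) (softmax fun j => ⟪μ j, x⟫ / σ))
      (nhdsWithin 0 (Set.Ioi 0))
      (nhds ((1 / 2) * (‖x - μ k‖ ^ 2
        - Finset.univ.inf' ⟨k, Finset.mem_univ k⟩ fun c => ‖x - μ c‖ ^ 2))) := by
  have hne : (Finset.univ : Finset (Fin K)).Nonempty := ⟨k, Finset.mem_univ k⟩
  set v : Fin K → ℝ := fun j => ⟪μ j, x⟫
  have hlimit : (1 / 2) * (‖x - μ k‖ ^ 2 - Finset.univ.inf' hne fun c => ‖x - μ c‖ ^ 2)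
      = Finset.univ.sup' hne v - v k := by
    rw [Finset.univ.inf'_norm_sub_sq_eq_two_sub_two_sup'_inner hne hx hμ,
      norm_sub_sq_eq_two_sub_two_inner hx (hμ k)]
    ring
  rw [hlimit]
  refine ((Finset.univ.tendsto_mul_log_sum_exp_div_s8 hne v).sub_const (v k)).congr' ?_
  filter_upwards [self_mem_nhdsWithin] with σ hσ
  rw [crossEntropy_onehot_softmax, mul_sub, mul_div_cancel₀ _ (ne_of_gt hσ)]
end
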